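/- Let ρ ≥ 3 and d be integers with either d ∈ {1, 2, 4}, or (ρ, d) = (3, 8), set N = ρd/2 and m = d/2 (as real numbers), and let s ≥ 2 be an integer. Then (s/(N+2s−1))·Q_s ≠ Q_1, where Q_i = ((N+2i−1)/(N+i−1))·((N)_i·(N−m)_i)/((m)_i·i!). -/

import Mathlib

/-- The ascending Pochhammer symbol `(x)_n = x (x+1) ⋯ (x+n-1)` for a real `x`. -/
noncomputable def poch (x : ℝ) (n : ℕ) : ℝ := (ascPochhammer ℝ n).eval x

lemma poch_zero (x : ℝ) : poch x 0 = 1 := by simp [poch]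
lemma poch_succ (x : ℝ) (n : ℕ) : poch x (n+1) = poch x n * (x + n) := by
  simp [poch, ascPochhammer_succ_right]
lemma poch_one (x : ℝ) : poch x 1 = x := by simp [poch]
lemma poch_pos {x : ℝ} (hx : 0 < x) (n : ℕ) : 0 < poch x n := by
  induction n with
  | zero => simp [poch_zero]
  | succ k ih => rw [poch_succ]; positivity
lemma poch_one_left (n : ℕ) : poch 1 n = n.factorial := by
  induction n with
  | zero => simp [poch_zero]
  | succ k ih => rw [poch_succ, ih, Nat.factorial_succ]; push_cast; ring
lemma poch_half (n : ℕ) : poch (3/2) n = (2*n+1) * poch (1/2) n := by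
  induction n with
  | zero => simp [poch_zero]
  | succ k ih => rw [poch_succ, poch_succ, ih]; push_cast; ring

lemma main_ineq (N m : ℝ) (hm : 0 < m) (hNm : 2*m ≤ N)
    (hkey : 2*N*m + m + 1 < N^2) :
    ∀ s : ℕ, 2 ≤ s →
      (N+1)*(N-m)/m < (s:ℝ) * (poch N s * poch (N-m) s) /
        ((N + s - 1) * (poch m s * s.factorial)) := by
  have hN1 : 1 < N := by nlinarith
  have hNmpos : 0 < N - m := by nlinarith
  intro s hs
  induction s, hs using Nat.le_induction with
  | base =>
    have e1 : poch N 2 = N * (N+1) := by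
      rw [show (2:ℕ) = 1+1 from rfl, poch_succ, poch_one]; push_cast; ring
    have e2 : poch (N-m) 2 = (N-m) * (N-m+1) := by
      rw [show (2:ℕ) = 1+1 from rfl, poch_succ, poch_one]; push_cast; ring
    have e3 : poch m 2 = m * (m+1) := by
      rw [show (2:ℕ) = 1+1 from rfl, poch_succ, poch_one]; push_cast; ring
    rw [e1, e2, e3]
    have hden : 0 < (N + ((2:ℕ):ℝ) - 1) * (m * (m+1) * (((2:ℕ).factorial :ℝ))) := by
      norm_num [Nat.factorial]
      nlinarith [mul_pos (mul_pos hm (show (0:ℝ) < m+1 by linarith))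
        (show (0:ℝ) < N + 2 - 1 by linarith)]
    rw [div_lt_div_iff₀ hm hden]
    norm_num [Nat.factorial]
    nlinarith [mul_pos (mul_pos (mul_pos hm (show (0:ℝ) < N+1 by linarith)) hNmpos)
      (show (0:ℝ) < N^2 - (2*N*m + m + 1) by linarith)]
  | succ k hk ih =>
    have hkpos : (0:ℝ) < k := by positivity
    have hk2 : (2:ℝ) ≤ k := by exact_mod_cast hk
    have hA := poch_pos (show (0:ℝ) < N by linarith) k
    have hB := poch_pos hNmpos k
    have hC := poch_pos hm k
    have hfac : (0:ℝ) < (k.factorial : ℝ) := by positivity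
    have hNk1 : (0:ℝ) < N + k - 1 := by linarith
    have hNk : (0:ℝ) < N + k := by linarith
    have hmk : (0:ℝ) < m + k := by linarith
    have hr : (1:ℝ) ≤ (N + k - 1) * (N - m + k) / ((k:ℝ) * (m + k)) := by
      rw [le_div_iff₀ (by positivity)]
      nlinarith
    have heq : (↑(k+1):ℝ) * (poch N (k+1) * poch (N-m) (k+1)) /
        ((N + ↑(k+1) - 1) * (poch m (k+1) * ((k+1).factorial : ℝ)))
        = ((k:ℝ) * (poch N k * poch (N-m) k) /
          ((N + k - 1) * (poch m k * (k.factorial : ℝ)))) *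
          ((N + k - 1) * (N - m + k) / ((k:ℝ) * (m + k))) := by
      rw [div_mul_div_comm, div_eq_div_iff]
      · rw [poch_succ, poch_succ, poch_succ, Nat.factorial_succ]
        push_cast; ring
      · have h1 : (0:ℝ) < N + ↑(k+1) - 1 := by push_cast; linarith
        have h2 := poch_pos hm (k+1)
        have h3 : (0:ℝ) < (((k+1).factorial : ℕ) : ℝ) := by positivity
        exact (mul_pos h1 (mul_pos h2 h3)).ne'
      · exact (mul_pos (mul_pos hNk1 (mul_pos hC hfac)) (mul_pos hkpos hmk)).ne'
    rw [heq]
    have hpos : 0 < (k:ℝ) * (poch N k * poch (N-m) k) /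
        ((N + k - 1) * (poch m k * (k.factorial : ℝ))) := by positivity
    calc (N+1)*(N-m)/m < (k:ℝ) * (poch N k * poch (N-m) k) /
          ((N + k - 1) * (poch m k * (k.factorial:ℝ))) := ih
      _ ≤ _ := le_mul_of_one_le_right hpos.le hr

lemma reduce (N m : ℝ) (hm : 0 < m) (hNm : 2*m ≤ N)
    (hkey : 2*N*m + m + 1 < N^2)
    (Q : ℕ → ℝ)
    (hQ : ∀ i : ℕ, Q i =
      ((N + 2 * i - 1) / (N + i - 1)) * (poch N i * poch (N - m) i) /
        (poch m i * (Nat.factorial i : ℝ)))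
    (s : ℕ) (hs : 2 ≤ s) :
    ((s : ℝ) / (N + 2 * s - 1)) * Q s ≠ Q 1 := by
  have hN1 : 1 < N := by nlinarith
  have hs2 : (2:ℝ) ≤ s := by exact_mod_cast hs
  have hC := poch_pos hm s
  have hfac : (0:ℝ) < (s.factorial : ℝ) := by positivity
  have hd1 : N + 2*(s:ℝ) - 1 ≠ 0 := ne_of_gt (by linarith)
  have hd2 : N + (s:ℝ) - 1 ≠ 0 := ne_of_gt (by linarith)
  have hN0 : N ≠ 0 := by positivity
  have hQ1 : Q 1 = (N+1)*(N-m)/m := by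
    rw [hQ]
    rw [poch_one, poch_one, poch_one]
    norm_num [Nat.factorial]
    field_simp [hN0, (show m ≠ 0 from hm.ne')]
    ring
  have hL : ((s : ℝ) / (N + 2 * s - 1)) * Q s
      = (s:ℝ) * (poch N s * poch (N-m) s) /
        ((N + s - 1) * (poch m s * s.factorial)) := by
    rw [hQ]
    field_simp [hd1, hd2, hC.ne', hfac.ne', (show N + (s:ℝ)*2 - 1 ≠ 0 by rw [mul_comm]; exact hd1)]
  rw [hL, hQ1]
  exact (main_ineq N m hm hNm hkey s hs).ne'

theorem stmt_11 (ρ d : ℤ) (hρ : 3 ≤ ρ)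
    (hcase : (d = 1 ∨ d = 2 ∨ d = 4) ∨ (ρ = 3 ∧ d = 8))
    (N m : ℝ) (hN : N = (ρ : ℝ) * (d : ℝ) / 2) (hm : m = (d : ℝ) / 2)
    (Q : ℕ → ℝ)
    (hQ : ∀ i : ℕ, Q i =
      ((N + 2 * i - 1) / (N + i - 1)) * (poch N i * poch (N - m) i) /
        (poch m i * (Nat.factorial i : ℝ)))
    (s : ℕ) (hs : 2 ≤ s) :
    ((s : ℝ) / (N + 2 * s - 1)) * Q s ≠ Q 1 := by
  have hρR : (3:ℝ) ≤ (ρ:ℝ) := by exact_mod_cast hρ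
  rcases hcase with (h1 | h2 | h4) | ⟨hρ3, h8⟩
  · -- d = 1
    subst h1
    norm_num at hN hm
    rcases eq_or_lt_of_le hρ with hρ3 | hρ4
    · -- ρ = 3 : the exceptional case N = 3/2, m = 1/2
      subst hm
      have hN' : N = 3/2 := by rw [hN, ← hρ3]; norm_num
      subst hN'
      have hP := poch_pos (show (0:ℝ) < 1/2 by norm_num) s
      have hfac : (0:ℝ) < (s.factorial : ℝ) := by positivity
      have hs2 : (2:ℝ) ≤ s := by exact_mod_cast hs
      have hQ1 : Q 1 = 5 := by
        rw [hQ]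
        rw [show (3/2 - 1/2 : ℝ) = 1 by norm_num, poch_one, poch_one]
        norm_num [Nat.factorial, poch_one_left, poch_one]
      have hL : ((s : ℝ) / (3/2 + 2 * s - 1)) * Q s = 2 * s := by
        rw [hQ]
        rw [show (3/2 - 1/2 : ℝ) = 1 by norm_num, poch_one_left, poch_half]
        rw [div_mul_eq_mul_div, div_mul_eq_mul_div, div_div, ← mul_div_assoc, div_div,
          div_eq_iff (by exact (mul_pos (mul_pos (show (0:ℝ) < 3/2+(s:ℝ)-1 by linarith) (mul_pos hP hfac)) (show (0:ℝ) < 3/2+2*(s:ℝ)-1 by linarith)).ne')]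
        ring
      rw [hL, hQ1]
      intro h
      have h5 : ((2*s : ℕ) : ℝ) = 5 := by push_cast; linarith
      have : (2*s : ℕ) = 5 := by exact_mod_cast h5
      omega
    · -- 4 ≤ ρ
      have h4ρ : (4:ℝ) ≤ (ρ:ℝ) := by exact_mod_cast hρ4
      refine reduce N m ?_ ?_ ?_ Q hQ s hs <;> simp only [hN, hm] <;> nlinarith
  · -- d = 2
    subst h2
    refine reduce N m ?_ ?_ ?_ Q hQ s hs <;> simp only [hN, hm] <;> push_cast <;> nlinarith
  · -- d = 4
    subst h4
    refine reduce N m ?_ ?_ ?_ Q hQ s hs <;> simp only [hN, hm] <;> push_cast <;> nlinarith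
  · -- (ρ, d) = (3, 8)
    subst hρ3; subst h8
    refine reduce N m ?_ ?_ ?_ Q hQ s hs <;> simp only [hN, hm] <;> norm_num
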